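/- Let X₁, X₂, Z be finite nonempty sets and let P₀ and P₁ be probability mass functions on X₁ × X₂ × Z such that: (i) P₀ and P₁ have the same marginal distribution on X₁ × Z; (ii) under P₁ the first and second coordinates are conditionally independent given the third coordinate; (iii) for every z ∈ Z of positive probability, the conditional distribution of the second coordinate given that the third coordinate equals z is the same under P₁ as under P₀. Then the Kullback–Leibler divergence between the marginal distributions of P₀ and P₁ on X₁ × X₂ is at most the conditional mutual information I_{P₀}(X₁; X₂ | Z) computed under P₀ (both in nats). (This is the discrete form of the paper's Lemma 1: if the attacker generates the induced channel estimate according to the conditional law of the legitimate channel given her observations, the PLA secure authentication rate, which equals the KL divergence between the two hypotheses' joint laws, is upper-bounded by I(x(1); x(2t+1) | z(2t)).) -/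

import Mathlib

open scoped BigOperators

open scoped Classical in
noncomputable def dKL {α : Type*} [Fintype α] (p q : α → ℝ) : EReal :=
  if ∀ x, q x = 0 → p x = 0 then
    (((∑ x, if p x = 0 then 0 else p x * Real.log (p x / q x)) : ℝ) : EReal)
  else ⊤

/- Conditional mutual information `I(X₁; X₂ | Z)` of a probability mass function on
`X₁ × X₂ × Z`. -/
open scoped Classical in
noncomputable def condMI {X₁ X₂ Z : Type*} [Fintype X₁] [Fintype X₂] [Fintype Z]
    (p : X₁ × X₂ × Z → ℝ) : ℝ :=
  ∑ z, ∑ x₁, ∑ x₂,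
    if p (x₁, x₂, z) = 0 then 0
    else p (x₁, x₂, z) *
      Real.log (p (x₁, x₂, z) * (∑ a, ∑ b, p (a, b, z)) /
        ((∑ b, p (x₁, b, z)) * (∑ a, p (a, x₂, z))))

/-!
Under `P₁` the triple is distributed as `P₀(x₁ | z) P₀(x₂ | z) P₀(z)` wherever `P₀` charges it:
the `Z`-marginals agree by (i), then the `X₂ × Z`-marginals agree by (iii), and (ii) factorises
`P₁`. Marginalising out `z` can only decrease the KL divergence (log-sum inequality), and the KL
divergence of `P₀` from this conditionally independent law is exactly `I_{P₀}(X₁; X₂ | Z)`.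
-/

open Finset Real

open scoped Classical in
noncomputable def klTerm (a b : ℝ) : ℝ :=
  if a = 0 then 0 else a * log (a / b)

@[simp]
lemma klTerm_zero_left (b : ℝ) : klTerm 0 b = 0 := if_pos rfl

/-- The supporting line of the convex function `a ↦ a log (a / b)` at `a = b * c`. -/
lemma mul_log_add_sub_le_klTerm {a b c : ℝ} (ha : 0 ≤ a) (hb : 0 ≤ b) (hab : 0 < a → 0 < b)
    (hc : 0 < c) : a * log c + a - b * c ≤ klTerm a b := by
  rcases ha.eq_or_lt with rfl | ha
  · simp only [klTerm_zero_left, zero_mul, zero_add, zero_sub, Left.neg_nonpos_iff]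
    positivity
  have hb_pos := hab ha
  have hx : 0 < a / (b * c) := by positivity
  have hlog : log (a / b) = log c + log (a / (b * c)) := by
    rw [← log_mul hc.ne' hx.ne']
    congr 1
    field_simp
  have hinv : a * (1 - (a / (b * c))⁻¹) = a - b * c := by
    field_simp
  rw [klTerm, if_neg ha.ne', hlog, mul_add]
  linarith [mul_le_mul_of_nonneg_left (one_sub_inv_le_log_of_pos hx) ha.le]

lemma klTerm_sum_le_sum_klTerm {ι : Type*} (s : Finset ι) {a b : ι → ℝ}
    (ha : ∀ i ∈ s, 0 ≤ a i) (hb : ∀ i ∈ s, 0 ≤ b i) (hab : ∀ i ∈ s, 0 < a i → 0 < b i) :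
    klTerm (∑ i ∈ s, a i) (∑ i ∈ s, b i) ≤ ∑ i ∈ s, klTerm (a i) (b i) := by
  set A := ∑ i ∈ s, a i
  set B := ∑ i ∈ s, b i
  rcases (sum_nonneg ha).eq_or_lt with hA | hA
  · have ha0 := (sum_eq_zero_iff_of_nonneg ha).1 hA.symm
    rw [show A = 0 from hA.symm, klTerm_zero_left]
    exact (sum_eq_zero fun i hi => by rw [ha0 i hi, klTerm_zero_left]).ge
  obtain ⟨i₀, hi₀, hai₀⟩ := exists_lt_of_sum_lt (by simpa using hA : ∑ i ∈ s, (0 : ℝ) < A)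
  have hB : 0 < B := (hab i₀ hi₀ hai₀).trans_le (single_le_sum hb hi₀)
  calc klTerm A B = ∑ i ∈ s, (a i * log (A / B) + a i - b i * (A / B)) := by
        rw [klTerm, if_neg hA.ne', sum_sub_distrib, sum_add_distrib, ← sum_mul, ← sum_mul]
        field_simp
        ring
    _ ≤ ∑ i ∈ s, klTerm (a i) (b i) :=
        sum_le_sum fun i hi => mul_log_add_sub_le_klTerm (ha i hi) (hb i hi) (hab i hi)
          (by positivity)

lemma klTerm_congr_right {a b b' : ℝ} (h : a ≠ 0 → b = b') : klTerm a b = klTerm a b' := by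
  by_cases ha : a = 0
  · rw [ha, klTerm_zero_left, klTerm_zero_left]
  · rw [h ha]

lemma dKL_eq_sum_klTerm {α : Type*} [Fintype α] {p q : α → ℝ} (h : ∀ x, q x = 0 → p x = 0) :
    dKL p q = ((∑ x, klTerm (p x) (q x) : ℝ) : EReal) := by
  rw [dKL, if_pos h]
  rfl

lemma dKL_sum_le_sum_klTerm {α β : Type*} [Fintype α] [Fintype β] {p q : α → β → ℝ}
    (hp : ∀ a b, 0 ≤ p a b) (hq : ∀ a b, 0 ≤ q a b) (hpq : ∀ a b, 0 < p a b → 0 < q a b) :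
    dKL (fun a => ∑ b, p a b) (fun a => ∑ b, q a b) ≤
      ((∑ a, ∑ b, klTerm (p a b) (q a b) : ℝ) : EReal) := by
  have hac : ∀ a, ∑ b, q a b = 0 → ∑ b, p a b = 0 := by
    intro a hqa
    have hq0 := (sum_eq_zero_iff_of_nonneg fun b _ => hq a b).1 hqa
    exact sum_eq_zero fun b hb =>
      (hp a b).eq_or_lt.elim Eq.symm fun h => absurd (hq0 b hb) (hpq a b h).ne'
  rw [dKL_eq_sum_klTerm hac, EReal.coe_le_coe_iff]
  exact sum_le_sum fun a _ => klTerm_sum_le_sum_klTerm univ (fun b _ => hp a b)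
    (fun b _ => hq a b) fun b _ => hpq a b

section Marginals

variable {X₁ X₂ Z : Type*}

def margZ [Fintype X₁] [Fintype X₂] (P : X₁ × X₂ × Z → ℝ) (z : Z) : ℝ :=
  ∑ a, ∑ b, P (a, b, z)

def marg13 [Fintype X₂] (P : X₁ × X₂ × Z → ℝ) (x₁ : X₁) (z : Z) : ℝ := ∑ b, P (x₁, b, z)

def marg23 [Fintype X₁] (P : X₁ × X₂ × Z → ℝ) (x₂ : X₂) (z : Z) : ℝ := ∑ a, P (a, x₂, z)

/-- `P(x₁ | z) P(x₂ | z) P(z)`. -/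
noncomputable def condIndepLaw [Fintype X₁] [Fintype X₂] (P : X₁ × X₂ × Z → ℝ)
    (x₁ : X₁) (x₂ : X₂) (z : Z) : ℝ :=
  marg13 P x₁ z * marg23 P x₂ z / margZ P z

lemma condMI_eq_sum_klTerm [Fintype X₁] [Fintype X₂] [Fintype Z] (P : X₁ × X₂ × Z → ℝ) :
    condMI P = ∑ x₁, ∑ x₂, ∑ z, klTerm (P (x₁, x₂, z)) (condIndepLaw P x₁ x₂ z) := by
  rw [condMI, sum_comm]
  refine sum_congr rfl fun x₁ _ => ?_
  rw [sum_comm]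
  simp only [klTerm, condIndepLaw, margZ, marg13, marg23, div_div_eq_mul_div]

variable {P : X₁ × X₂ × Z → ℝ}

lemma marg13_pos [Fintype X₂] (hP : ∀ w, 0 ≤ P w) {x₁ : X₁} {x₂ : X₂} {z : Z}
    (h : 0 < P (x₁, x₂, z)) : 0 < marg13 P x₁ z :=
  h.trans_le (single_le_sum (fun b _ => hP (x₁, b, z)) (mem_univ x₂))

lemma marg23_pos [Fintype X₁] (hP : ∀ w, 0 ≤ P w) {x₁ : X₁} {x₂ : X₂} {z : Z}
    (h : 0 < P (x₁, x₂, z)) : 0 < marg23 P x₂ z :=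
  h.trans_le (single_le_sum (fun a _ => hP (a, x₂, z)) (mem_univ x₁))

lemma margZ_pos [Fintype X₁] [Fintype X₂] (hP : ∀ w, 0 ≤ P w) {x₁ : X₁} {x₂ : X₂} {z : Z}
    (h : 0 < P (x₁, x₂, z)) : 0 < margZ P z :=
  (marg13_pos hP h).trans_le
    (single_le_sum (fun a _ => sum_nonneg fun b _ => hP (a, b, z)) (mem_univ x₁))

lemma condIndepLaw_pos [Fintype X₁] [Fintype X₂] (hP : ∀ w, 0 ≤ P w) {x₁ : X₁} {x₂ : X₂} {z : Z}
    (h : 0 < P (x₁, x₂, z)) : 0 < condIndepLaw P x₁ x₂ z :=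
  div_pos (mul_pos (marg13_pos hP h) (marg23_pos hP h)) (margZ_pos hP h)

variable [Fintype X₁] [Fintype X₂] {P₀ P₁ : X₁ × X₂ × Z → ℝ}

lemma margZ_eq_of_marg13_eq (h : ∀ x₁ z, marg13 P₀ x₁ z = marg13 P₁ x₁ z) (z : Z) :
    margZ P₀ z = margZ P₁ z :=
  sum_congr rfl fun x₁ _ => h x₁ z

lemma eq_condIndepLaw_of_pos (h₀ : ∀ w, 0 ≤ P₀ w)
    (hmarg13 : ∀ x₁ z, marg13 P₀ x₁ z = marg13 P₁ x₁ z)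
    (hci : ∀ x₁ x₂ z, P₁ (x₁, x₂, z) * margZ P₁ z = marg13 P₁ x₁ z * marg23 P₁ x₂ z)
    (hcond2 : ∀ z, 0 < margZ P₀ z → ∀ x₂,
      marg23 P₁ x₂ z / margZ P₁ z = marg23 P₀ x₂ z / margZ P₀ z)
    {x₁ : X₁} {x₂ : X₂} {z : Z} (h : 0 < P₀ (x₁, x₂, z)) :
    P₁ (x₁, x₂, z) = condIndepLaw P₀ x₁ x₂ z := by
  have hZ := margZ_pos h₀ h
  have hmargZ := margZ_eq_of_marg13_eq hmarg13 z
  have hmarg23 : marg23 P₁ x₂ z = marg23 P₀ x₂ z := by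
    have := hcond2 z hZ x₂
    rwa [← hmargZ, div_left_inj' hZ.ne'] at this
  rw [condIndepLaw, eq_div_iff hZ.ne', hmargZ, hmarg13, ← hmarg23]
  exact hci x₁ x₂ z

end Marginals

theorem stmt0_general {X₁ X₂ Z : Type*} [Fintype X₁] [Fintype X₂] [Fintype Z]
    (P₀ P₁ : X₁ × X₂ × Z → ℝ)
    (h₀pos : ∀ w, 0 ≤ P₀ w)
    (h₁pos : ∀ w, 0 ≤ P₁ w)
    -- (i) same marginal on X₁ × Z
    (hmarg13 : ∀ x₁ z, ∑ x₂, P₀ (x₁, x₂, z) = ∑ x₂, P₁ (x₁, x₂, z))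
    -- (ii) conditional independence of the first two coordinates given the third, under P₁
    (hci : ∀ x₁ x₂ z,
      P₁ (x₁, x₂, z) * (∑ a, ∑ b, P₁ (a, b, z)) =
        (∑ b, P₁ (x₁, b, z)) * (∑ a, P₁ (a, x₂, z)))
    -- (iii) same conditional law of the second coordinate given the third, for z of
    -- positive probability
    (hcond2 : ∀ z, 0 < ∑ a, ∑ b, P₀ (a, b, z) → ∀ x₂,
      (∑ a, P₁ (a, x₂, z)) / (∑ a, ∑ b, P₁ (a, b, z)) =
        (∑ a, P₀ (a, x₂, z)) / (∑ a, ∑ b, P₀ (a, b, z))) :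
    dKL (fun p : X₁ × X₂ => ∑ z, P₀ (p.1, p.2, z))
        (fun p : X₁ × X₂ => ∑ z, P₁ (p.1, p.2, z)) ≤
      (condMI P₀ : EReal) := by
  have hP₁ {x₁ x₂ z} (h : 0 < P₀ (x₁, x₂, z)) : P₁ (x₁, x₂, z) = condIndepLaw P₀ x₁ x₂ z :=
    eq_condIndepLaw_of_pos h₀pos hmarg13 hci hcond2 h
  calc _ ≤ ((∑ x : X₁ × X₂, ∑ z, klTerm (P₀ (x.1, x.2, z)) (P₁ (x.1, x.2, z)) : ℝ) : EReal) :=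
        dKL_sum_le_sum_klTerm (fun _ _ => h₀pos _) (fun _ _ => h₁pos _) fun _ _ h =>
          hP₁ h ▸ condIndepLaw_pos h₀pos h
    _ = condMI P₀ := by
        rw [condMI_eq_sum_klTerm, Fintype.sum_prod_type]
        exact congrArg _ <| sum_congr rfl fun x₁ _ => sum_congr rfl fun x₂ _ =>
          sum_congr rfl fun z _ => klTerm_congr_right fun h =>
            hP₁ ((h₀pos _).lt_of_ne' h)

theorem stmt0 {X₁ X₂ Z : Type*} [Fintype X₁] [Fintype X₂] [Fintype Z]
    [Nonempty X₁] [Nonempty X₂] [Nonempty Z]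
    (P₀ P₁ : X₁ × X₂ × Z → ℝ)
    (h₀pos : ∀ w, 0 ≤ P₀ w) (h₀sum : ∑ w, P₀ w = 1)
    (h₁pos : ∀ w, 0 ≤ P₁ w) (h₁sum : ∑ w, P₁ w = 1)
    -- (i) same marginal on X₁ × Z
    (hmarg13 : ∀ x₁ z, ∑ x₂, P₀ (x₁, x₂, z) = ∑ x₂, P₁ (x₁, x₂, z))
    -- (ii) conditional independence of the first two coordinates given the third, under P₁
    (hci : ∀ x₁ x₂ z,
      P₁ (x₁, x₂, z) * (∑ a, ∑ b, P₁ (a, b, z)) =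
        (∑ b, P₁ (x₁, b, z)) * (∑ a, P₁ (a, x₂, z)))
    -- (iii) same conditional law of the second coordinate given the third, for z of
    -- positive probability
    (hcond2 : ∀ z, 0 < ∑ a, ∑ b, P₀ (a, b, z) → ∀ x₂,
      (∑ a, P₁ (a, x₂, z)) / (∑ a, ∑ b, P₁ (a, b, z)) =
        (∑ a, P₀ (a, x₂, z)) / (∑ a, ∑ b, P₀ (a, b, z))) :
    dKL (fun p : X₁ × X₂ => ∑ z, P₀ (p.1, p.2, z))
        (fun p : X₁ × X₂ => ∑ z, P₁ (p.1, p.2, z)) ≤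
      (condMI P₀ : EReal) :=
  stmt0_general P₀ P₁ h₀pos h₁pos hmarg13 hci hcond2
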